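/- Let E be a real inner product space and let f_A, f_B : E → ℝ be differentiable functions whose gradients satisfy the first-order concavity inequality f(y) ≤ f(x) + ⟨∇f(x), y − x⟩ for all x, y ∈ E (for both f = f_A and f = f_B). Suppose f_A is L-Lipschitz for some L ≥ 0. Let S_A, S_B ∈ E with ∇f_A(S_A) ≠ 0 and ∇f_B(S_B) ≠ 0, let θ_c ∈ [0, π/2] with ∠(∇f_A(S_A), ∇f_B(S_B)) ≤ θ_c, and let δ ≥ 0. Then for every T ∈ E with ‖T‖ ≤ δ, either f_A(S_A + T) − f_A(S_A) ≤ δ·L·sin θ_c or f_B(S_B − T) − f_B(S_B) ≤ δ·L·sin θ_c. -/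

import Mathlib

/-!
If `⟪∇f_B(S_B), T⟫ > 0`, concavity of `f_B` makes `-T` strictly unprofitable for `B`. Otherwise
`T` makes an obtuse angle with `∇f_B(S_B)`, so by the triangle inequality for angles it makes an
angle of at least `π/2 - θ_c` with `∇f_A(S_A)`; hence `⟪∇f_A(S_A), T⟫ ≤ ‖∇f_A(S_A)‖ ‖T‖ sin θ_c`,
and concavity together with `‖∇f_A‖ ≤ L` bounds the gain of `A` by `δ L sin θ_c`.
-/

open Real RealInnerProductSpace InnerProductGeometry

section InnerProductSpace

variable {V : Type*} [NormedAddCommGroup V] [InnerProductSpace ℝ V]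

theorem InnerProductGeometry.pi_div_two_le_angle_of_inner_nonpos {x y : V} (h : ⟪x, y⟫ ≤ 0) :
    π / 2 ≤ angle x y := by
  rw [angle, ← not_lt, arccos_lt_pi_div_two, not_lt]
  exact div_nonpos_of_nonpos_of_nonneg h (by positivity)

theorem inner_le_norm_mul_norm_mul_sin_angle_of_inner_nonpos {u v t : V}
    (huv : angle u v ≤ π / 2) (hvt : ⟪v, t⟫ ≤ 0) :
    ⟪u, t⟫ ≤ ‖u‖ * ‖t‖ * sin (angle u v) := by
  have hut : π / 2 - angle u v ≤ angle u t := by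
    have := angle_le_angle_add_angle v u t
    linarith [pi_div_two_le_angle_of_inner_nonpos hvt, angle_comm u v]
  have hcos : cos (angle u t) ≤ sin (angle u v) := by
    rw [← cos_pi_div_two_sub]
    exact cos_le_cos_of_nonneg_of_le_pi (by linarith) (angle_le_pi u t) hut
  calc ⟪u, t⟫ = cos (angle u t) * (‖u‖ * ‖t‖) := (cos_angle_mul_norm_mul_norm u t).symm
    _ ≤ sin (angle u v) * (‖u‖ * ‖t‖) := by gcongr
    _ = ‖u‖ * ‖t‖ * sin (angle u v) := mul_comm _ _

theorem norm_le_of_supergradient_of_lipschitz {f : V → ℝ} {x g : V} {L : ℝ} (hL : 0 ≤ L)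
    (hsup : ∀ y, f y ≤ f x + ⟪g, y - x⟫) (hLip : ∀ y, f x - f y ≤ L * ‖x - y‖) :
    ‖g‖ ≤ L := by
  have hdescent : f (x - g) ≤ f x - ‖g‖ ^ 2 := by
    simpa [real_inner_self_eq_norm_sq, ← sub_eq_add_neg] using hsup (x - g)
  have hsq : ‖g‖ ^ 2 ≤ L * ‖g‖ := by
    simpa using (hLip (x - g)).trans' (by linarith)
  rcases (norm_nonneg g).eq_or_lt with h0 | hpos
  · rw [← h0]; exact hL
  · nlinarith

end InnerProductSpace

theorem stmt_11_general {E : Type*} [NormedAddCommGroup E] [InnerProductSpace ℝ E]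
    [CompleteSpace E]
    (fA fB : E → ℝ)
    (hconcA : ∀ x y : E, fA y ≤ fA x + ⟪gradient fA x, y - x⟫)
    (hconcB : ∀ x y : E, fB y ≤ fB x + ⟪gradient fB x, y - x⟫)
    (L : ℝ) (hL : 0 ≤ L)
    (hLip : ∀ x y : E, |fA y - fA x| ≤ L * ‖x - y‖)
    (SA SB : E)
    (θc : ℝ) (hθc1 : θc ≤ Real.pi / 2)
    (hang : InnerProductGeometry.angle (gradient fA SA) (gradient fB SB) ≤ θc)
    (δ : ℝ) :
    ∀ T : E, ‖T‖ ≤ δ →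
      fA (SA + T) - fA SA ≤ δ * L * Real.sin θc ∨
      fB (SB - T) - fB SB ≤ δ * L * Real.sin θc := by
  intro T hT
  set gA := gradient fA SA
  set gB := gradient fB SB
  have hθ : angle gA gB ≤ π / 2 := hang.trans hθc1
  have hsin : 0 ≤ sin θc := sin_nonneg_of_nonneg_of_le_pi ((angle_nonneg gA gB).trans hang)
    (hθc1.trans (by linarith [pi_pos]))
  have hδ : 0 ≤ δ := (norm_nonneg T).trans hT
  by_cases hB : ⟪gB, T⟫ ≤ 0
  · left
    have hgA : ‖gA‖ ≤ L := norm_le_of_supergradient_of_lipschitz hL (hconcA SA)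
      fun y ↦ (le_abs_self _).trans (by simpa [abs_sub_comm] using hLip SA y)
    have hsinθ : sin (angle gA gB) ≤ sin θc :=
      sin_le_sin_of_le_of_le_pi_div_two (by linarith [pi_pos, angle_nonneg gA gB]) hθc1 hang
    calc fA (SA + T) - fA SA ≤ ⟪gA, T⟫ := by
          linarith [add_sub_cancel_left SA T ▸ hconcA SA (SA + T)]
      _ ≤ ‖gA‖ * ‖T‖ * sin (angle gA gB) :=
          inner_le_norm_mul_norm_mul_sin_angle_of_inner_nonpos hθ hB
      _ ≤ δ * L * sin θc := by
        rw [mul_comm δ]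
        gcongr
        exact sin_nonneg_of_nonneg_of_le_pi (angle_nonneg gA gB) (hθ.trans (by linarith [pi_pos]))
  · right
    have := hconcB SB (SB - T)
    rw [sub_sub_cancel_left, inner_neg_right] at this
    nlinarith [mul_nonneg hδ hL]

/-- Case 1 of the paper's Corollary: closely aligned gradients imply ε-weak
Pareto optimality with ε = δ·L·sin θ_c. -/
theorem stmt_11 {E : Type*} [NormedAddCommGroup E] [InnerProductSpace ℝ E]
    [CompleteSpace E]
    (fA fB : E → ℝ) (hdA : Differentiable ℝ fA) (hdB : Differentiable ℝ fB)
    (hconcA : ∀ x y : E, fA y ≤ fA x + ⟪gradient fA x, y - x⟫)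
    (hconcB : ∀ x y : E, fB y ≤ fB x + ⟪gradient fB x, y - x⟫)
    (L : ℝ) (hL : 0 ≤ L)
    (hLip : ∀ x y : E, |fA y - fA x| ≤ L * ‖x - y‖)
    (SA SB : E) (hgA : gradient fA SA ≠ 0) (hgB : gradient fB SB ≠ 0)
    (θc : ℝ) (hθc0 : 0 ≤ θc) (hθc1 : θc ≤ Real.pi / 2)
    (hang : InnerProductGeometry.angle (gradient fA SA) (gradient fB SB) ≤ θc)
    (δ : ℝ) (hδ : 0 ≤ δ) :
    ∀ T : E, ‖T‖ ≤ δ →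
      fA (SA + T) - fA SA ≤ δ * L * Real.sin θc ∨
      fB (SB - T) - fB SB ≤ δ * L * Real.sin θc :=
  stmt_11_general fA fB hconcA hconcB L hL hLip SA SB θc hθc1 hang δ
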